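/- Shishkov's reduction to bounded mappings: let X be a countably paracompact topological space, i.e. every countable open cover of X admits a locally finite open refinement, and let Y be a real normed space. Then the following are equivalent: (1) every lower semicontinuous multivalued mapping F from X to Y with nonempty closed convex values admits a continuous singlevalued selection; (2) every lower semicontinuous multivalued mapping F from X to Y with nonempty closed convex values whose total image F(X) = ⋃_{x∈X} F(x) is a bounded subset of Y admits a continuous singlevalued selection. -/

import Mathlib

/-!
For an arbitrary closed convex valued lower semicontinuous `F` it suffices to find a continuous
`r : X → ℝ` with `F x ∩ ball 0 (r x) ≠ ∅`: then `x ↦ (r x)⁻¹ • closure (F x ∩ ball 0 (r x))` is an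
admissible map with values in the unit ball, and multiplying any of its selections by `r` gives a
selection of `F`.

To find `r`, refine the countable open cover `{x | F x ∩ ball 0 n ≠ ∅}` to a locally finite open
cover `W`. The index set `A x = {n | x ∈ W n}` is finite, nonempty, and can only grow near `x`, so
`x ↦ [1 / (max A x + 1), 1 / (min A x + 1)]` is a bounded lower semicontinuous map with compact
interval values. Placed on a line of `Y`, it has a continuous selection `s` by hypothesis, and
`r = 1 / s` works. No partition of unity is needed, so `X` need not be normal.
-/

open Set Metric Filter Topology Bornology Pointwise

section Hemicontinuity

variable {X Y Z : Type*} [TopologicalSpace X] [TopologicalSpace Y] [TopologicalSpace Z]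

theorem LowerHemicontinuous.of_eventually_subset {F : X → Set Y}
    (h : ∀ x, ∀ᶠ x' in 𝓝 x, F x ⊆ F x') : LowerHemicontinuous F := fun x =>
  lowerHemicontinuousAt_iff.2 fun _ _ hu =>
    (h x).mono fun _ hx' => hu.mono (inter_subset_inter_left _ hx')

theorem LowerHemicontinuous.closure {F : X → Set Y} (hF : LowerHemicontinuous F) :
    LowerHemicontinuous fun x => closure (F x) := by
  rw [lowerHemicontinuous_iff_isOpen_inter_nonempty] at hF ⊢
  intro u hu
  simpa only [closure_inter_open_nonempty_iff hu] using hF u hu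

theorem LowerHemicontinuous.image_of_continuous_uncurry {F : X → Set Y}
    (hF : LowerHemicontinuous F) {φ : X → Y → Z} (hφ : Continuous (Function.uncurry φ)) :
    LowerHemicontinuous fun x => φ x '' F x := by
  refine fun x => lowerHemicontinuousAt_iff.2 ?_
  rintro u hu ⟨_, ⟨y, hy, rfl⟩, hyu⟩
  obtain ⟨O, V, hO, hV, hxO, hyV, hOV⟩ := isOpen_prod_iff.1 (hu.preimage hφ) x y hyu
  filter_upwards [hO.mem_nhds hxO, lowerHemicontinuousAt_iff.1 (hF x) V hV ⟨y, hy, hyV⟩]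
    with x' hx' ⟨y', hy', hy'V⟩
  exact ⟨φ x' y', mem_image_of_mem _ hy', hOV (mk_mem_prod hx' hy'V)⟩

end Hemicontinuity

theorem LowerHemicontinuous.inter_ball {X Y : Type*} [TopologicalSpace X] [PseudoMetricSpace Y]
    {F : X → Set Y} (hF : LowerHemicontinuous F) (c : Y) {r : X → ℝ} (hr : Continuous r) :
    LowerHemicontinuous fun x => F x ∩ ball c (r x) := by
  refine fun x => lowerHemicontinuousAt_iff.2 ?_
  rintro u hu ⟨y, ⟨hy, hyr⟩, hyu⟩
  obtain ⟨ρ, hyρ, hρr⟩ := exists_between (mem_ball.1 hyr)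
  filter_upwards [lowerHemicontinuousAt_iff.1 (hF x) (u ∩ ball c ρ) (hu.inter isOpen_ball)
      ⟨y, hy, hyu, hyρ⟩, hr.continuousAt.eventually_const_lt hρr]
    with x' ⟨y', hy', hy'u, hy'ρ⟩ hρx'
  exact ⟨y', ⟨hy', ball_subset_ball hρx'.le hy'ρ⟩, hy'u⟩

def CountablyParacompact (X : Type*) [TopologicalSpace X] : Prop :=
  ∀ U : ℕ → Set X, (∀ n, IsOpen (U n)) → (⋃ n, U n) = Set.univ →
    ∃ 𝒱 : Set (Set X), (∀ V ∈ 𝒱, IsOpen V) ∧ ⋃₀ 𝒱 = Set.univ ∧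
      (∀ V ∈ 𝒱, ∃ n, V ⊆ U n) ∧
      ∀ x : X, ∃ N ∈ nhds x, {V ∈ 𝒱 | (V ∩ N).Nonempty}.Finite

theorem CountablyParacompact.precise_refinement {X : Type*} [TopologicalSpace X]
    (hX : CountablyParacompact X) (U : ℕ → Set X) (hUo : ∀ n, IsOpen (U n))
    (hUc : ⋃ n, U n = univ) :
    ∃ W : ℕ → Set X, (∀ n, IsOpen (W n)) ∧ ⋃ n, W n = univ ∧ LocallyFinite W ∧
      ∀ n, W n ⊆ U n := by
  obtain ⟨𝒱, h𝒱o, h𝒱c, h𝒱U, h𝒱lf⟩ := hX U hUo hUc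
  choose! idx hidx using h𝒱U
  refine ⟨fun n => ⋃₀ {V ∈ 𝒱 | idx V = n}, fun n => isOpen_sUnion fun V hV => h𝒱o V hV.1,
    eq_univ_of_forall fun x => ?_, fun x => ?_,
    fun n => sUnion_subset fun V hV => hV.2 ▸ hidx V hV.1⟩
  · obtain ⟨V, hV, hxV⟩ : x ∈ ⋃₀ 𝒱 := h𝒱c ▸ mem_univ x
    exact mem_iUnion.2 ⟨idx V, V, ⟨hV, rfl⟩, hxV⟩
  · obtain ⟨N, hN, hfin⟩ := h𝒱lf x
    refine ⟨N, hN, (hfin.image idx).subset ?_⟩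
    rintro n ⟨y, ⟨V, ⟨hV, rfl⟩, hyV⟩, hyN⟩
    exact ⟨V, ⟨hV, y, hyV, hyN⟩, rfl⟩

def HasContinuousSelection {X Y : Type*} [TopologicalSpace X] [TopologicalSpace Y]
    (F : X → Set Y) : Prop :=
  ∃ f : X → Y, Continuous f ∧ ∀ x, f x ∈ F x

def BoundedSelectionProperty (X Y : Type*) [TopologicalSpace X] [NormedAddCommGroup Y]
    [NormedSpace ℝ Y] : Prop :=
  ∀ F : X → Set Y, LowerHemicontinuous F → (∀ x, (F x).Nonempty) → (∀ x, IsClosed (F x)) →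
    (∀ x, Convex ℝ (F x)) → IsBounded (⋃ x, F x) → HasContinuousSelection F

namespace BoundedSelectionProperty

variable {X Y : Type*} [TopologicalSpace X] [NormedAddCommGroup Y] [NormedSpace ℝ Y]

theorem real [Nontrivial Y] (hb : BoundedSelectionProperty X Y) :
    BoundedSelectionProperty X ℝ := by
  intro S hS hne hcl hconv hbdd
  obtain ⟨y₀, hy₀⟩ := exists_ne (0 : Y)
  obtain ⟨ℓ, hℓ⟩ := SeparatingDual.exists_eq_one (R := ℝ) hy₀
  set e := ContinuousLinearMap.toSpanSingleton ℝ y₀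
  have hcompact : ∀ x, IsCompact (S x) := fun x =>
    isCompact_of_isClosed_isBounded (hcl x) (hbdd.subset (subset_iUnion S x))
  obtain ⟨f, hf, hfS⟩ := hb (fun x => e '' S x)
    (hS.image_of_continuous_uncurry (φ := fun _ => e) (e.continuous.comp continuous_snd))
    (fun x => (hne x).image e) (fun x => ((hcompact x).image e.continuous).isClosed)
    (fun x => (hconv x).linear_image (e : ℝ →ₗ[ℝ] Y))
    (by rw [← image_iUnion]; exact e.lipschitz.isBounded_image hbdd)
  refine ⟨ℓ ∘ f, ℓ.continuous.comp hf, fun x => ?_⟩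
  obtain ⟨u, hu, hfu⟩ := hfS x
  simpa [← hfu, e, hℓ] using hu

theorem exists_continuous_gt_index (hsel : BoundedSelectionProperty X ℝ) {W : ℕ → Set X}
    (hWo : ∀ n, IsOpen (W n)) (hWc : ⋃ n, W n = univ) (hWlf : LocallyFinite W) :
    ∃ r : X → ℝ, Continuous r ∧ ∀ x, ∃ n, x ∈ W n ∧ (n : ℝ) < r x := by
  set A : X → Set ℕ := fun x => {n | x ∈ W n}
  have hAfin : ∀ x, (A x).Finite := hWlf.point_finite
  have hAne : ∀ x, (A x).Nonempty := fun x => mem_iUnion.1 (hWc ▸ mem_univ x)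
  have hAloc : ∀ x, ∀ᶠ x' in 𝓝 x, A x ⊆ A x' := fun x =>
    (eventually_all_finite (hAfin x)).2 fun n hn => (hWo n).mem_nhds hn
  set t : ℕ → ℝ := fun n => ((n : ℝ) + 1)⁻¹
  have ht_anti : Antitone t := fun m n hmn => by simp only [t]; gcongr
  have ht_pos : ∀ n, 0 < t n := fun n => by positivity
  set S : X → Set ℝ := fun x => Icc (t (sSup (A x))) (t (sInf (A x)))
  have hS : LowerHemicontinuous S := .of_eventually_subset fun x => by
    filter_upwards [hAloc x] with x' hx'
    exact Icc_subset_Icc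
      (ht_anti (le_csSup (hAfin x').bddAbove (hx' (Nat.sSup_mem (hAne x) (hAfin x).bddAbove))))
      (ht_anti (Nat.sInf_le (hx' (Nat.sInf_mem (hAne x)))))
  obtain ⟨s, hs, hsS⟩ := hsel S hS
    (fun x => nonempty_Icc.2 (ht_anti (csInf_le_csSup (hAne x) (OrderBot.bddBelow _)
      (hAfin x).bddAbove)))
    (fun _ => isClosed_Icc) (fun _ => convex_Icc _ _)
    ((isBounded_Icc 0 (t 0)).subset (iUnion_subset fun _ =>
      Icc_subset_Icc (ht_pos _).le (ht_anti (Nat.zero_le _))))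
  have hs_pos : ∀ x, 0 < s x := fun x => (ht_pos _).trans_le (hsS x).1
  refine ⟨fun x => (s x)⁻¹, hs.inv₀ fun x => (hs_pos x).ne',
    fun x => ⟨sInf (A x), Nat.sInf_mem (hAne x), ?_⟩⟩
  calc ((sInf (A x) : ℕ) : ℝ) < sInf (A x) + 1 := lt_add_one _
    _ ≤ (s x)⁻¹ := (le_inv_comm₀ (by positivity) (hs_pos x)).2 (hsS x).2

theorem exists_continuous_radius {Z : Type*} [PseudoMetricSpace Z]
    (hsel : BoundedSelectionProperty X ℝ) (hX : CountablyParacompact X) {F : X → Set Z}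
    (hF : LowerHemicontinuous F) (hne : ∀ x, (F x).Nonempty) (c : Z) :
    ∃ r : X → ℝ, Continuous r ∧ ∀ x, (F x ∩ ball c (r x)).Nonempty := by
  have hUo : ∀ n : ℕ, IsOpen {x | (F x ∩ ball c n).Nonempty} := fun n =>
    lowerHemicontinuous_iff_isOpen_inter_nonempty.1 hF _ isOpen_ball
  have hUc : ⋃ n : ℕ, {x | (F x ∩ ball c n).Nonempty} = univ := by
    refine eq_univ_of_forall fun x => ?_
    obtain ⟨y, hy⟩ := hne x
    obtain ⟨n, hn⟩ := exists_nat_gt (dist y c)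
    exact mem_iUnion.2 ⟨n, y, hy, hn⟩
  obtain ⟨W, hWo, hWc, hWlf, hWU⟩ := hX.precise_refinement _ hUo hUc
  obtain ⟨r, hr, hrW⟩ := hsel.exists_continuous_gt_index hWo hWc hWlf
  refine ⟨r, hr, fun x => ?_⟩
  obtain ⟨n, hxn, hnr⟩ := hrW x
  exact (hWU n hxn).mono (inter_subset_inter_right _ (ball_subset_ball hnr.le))

theorem hasContinuousSelection_of_radius (hb : BoundedSelectionProperty X Y) {F : X → Set Y}
    (hF : LowerHemicontinuous F) (hcl : ∀ x, IsClosed (F x)) (hconv : ∀ x, Convex ℝ (F x))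
    {r : X → ℝ} (hr : Continuous r) (hrF : ∀ x, (F x ∩ ball 0 (r x)).Nonempty) :
    HasContinuousSelection F := by
  have hr_pos : ∀ x, 0 < r x := fun x => nonempty_ball.1 ((hrF x).mono inter_subset_right)
  set G : X → Set Y := fun x => (r x)⁻¹ • closure (F x ∩ ball 0 (r x))
  have hG : LowerHemicontinuous G :=
    (hF.inter_ball 0 hr).closure.image_of_continuous_uncurry (φ := fun x y => (r x)⁻¹ • y)
      (((hr.comp continuous_fst).inv₀ fun p => (hr_pos p.1).ne').smul continuous_snd)
  have hGbdd : IsBounded (⋃ x, G x) := by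
    refine (isBounded_closedBall (x := (0 : Y)) (r := 1)).subset (iUnion_subset fun x => ?_)
    rintro _ ⟨z, hz, rfl⟩
    have hzr : ‖z‖ ≤ r x := by
      simpa using closure_ball_subset_closedBall (closure_mono inter_subset_right hz)
    rw [mem_closedBall_zero_iff, norm_smul, norm_inv, Real.norm_of_nonneg (hr_pos x).le]
    exact inv_mul_le_one_of_le₀ hzr (hr_pos x).le
  obtain ⟨g, hg, hgG⟩ := hb G hG (fun x => ((hrF x).mono subset_closure).smul_set)
    (fun x => isClosed_closure.smul₀ _)
    (fun x => ((hconv x).inter (convex_ball 0 _)).closure.smul _) hGbdd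
  refine ⟨fun x => r x • g x, hr.smul hg, fun x => ?_⟩
  obtain ⟨z, hz, hgz⟩ := mem_smul_set.1 (hgG x)
  show r x • g x ∈ F x
  rw [← hgz, smul_inv_smul₀ (hr_pos x).ne']
  exact closure_minimal inter_subset_left (hcl x) hz

theorem hasContinuousSelection (hb : BoundedSelectionProperty X Y) (hX : CountablyParacompact X)
    {F : X → Set Y} (hF : LowerHemicontinuous F) (hne : ∀ x, (F x).Nonempty)
    (hcl : ∀ x, IsClosed (F x)) (hconv : ∀ x, Convex ℝ (F x)) : HasContinuousSelection F := by
  cases subsingleton_or_nontrivial Y with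
  | inl _ =>
    refine ⟨fun _ => 0, continuous_const, fun x => ?_⟩
    obtain ⟨y, hy⟩ := hne x
    rwa [Subsingleton.elim y 0] at hy
  | inr _ =>
    obtain ⟨r, hr, hrF⟩ := hb.real.exists_continuous_radius hX hF hne 0
    exact hb.hasContinuousSelection_of_radius hF hcl hconv hr hrF

end BoundedSelectionProperty

/-- Shishkov's reduction to bounded mappings: over a countably paracompact domain,
all LSC closed-convex-valued mappings into a normed space admit continuous selections
if and only if all such mappings with bounded total image do. -/
theorem shishkov_reduction_to_bounded
    {X Y : Type*} [TopologicalSpace X]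
    [NormedAddCommGroup Y] [NormedSpace ℝ Y]
    (hcp : ∀ U : ℕ → Set X, (∀ n, IsOpen (U n)) → (⋃ n, U n) = Set.univ →
      ∃ 𝒱 : Set (Set X), (∀ V ∈ 𝒱, IsOpen V) ∧ ⋃₀ 𝒱 = Set.univ ∧
        (∀ V ∈ 𝒱, ∃ n, V ⊆ U n) ∧
        ∀ x : X, ∃ N ∈ nhds x, {V ∈ 𝒱 | (V ∩ N).Nonempty}.Finite) :
    ((∀ F : X → Set Y,
        (∀ U : Set Y, IsOpen U → IsOpen {x : X | (F x ∩ U).Nonempty}) →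
        (∀ x : X, (F x).Nonempty) → (∀ x : X, IsClosed (F x)) →
        (∀ x : X, Convex ℝ (F x)) →
        ∃ f : X → Y, Continuous f ∧ ∀ x : X, f x ∈ F x) ↔
      (∀ F : X → Set Y,
        (∀ U : Set Y, IsOpen U → IsOpen {x : X | (F x ∩ U).Nonempty}) →
        (∀ x : X, (F x).Nonempty) → (∀ x : X, IsClosed (F x)) →
        (∀ x : X, Convex ℝ (F x)) →
        Bornology.IsBounded (⋃ x : X, F x) →
        ∃ f : X → Y, Continuous f ∧ ∀ x : X, f x ∈ F x)) := by
  simp only [← lowerHemicontinuous_iff_isOpen_inter_nonempty]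
  exact ⟨fun h F hF hne hcl hconv _ => h F hF hne hcl hconv,
    fun hb _ hF hne hcl hconv =>
      BoundedSelectionProperty.hasContinuousSelection hb hcp hF hne hcl hconv⟩
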